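/- Let G be a simple connected graph on n vertices with edge connectivity κ′(G) ≤ k, where 1 ≤ k ≤ n−1. Then SO(G) ≤ k√(k² + (n−1)²) + k(n−k−1)√((n−1)² + (n−2)²) + (√2/2)·k(k−1)(n−1) + (√2/2)·(n−k−1)(n−k−2)(n−2), with equality if and only if G ≅ K_n^k. -/

import Mathlib

/-! A set `F` of at most `k` edges whose removal disconnects `G` splits the vertices into two
nonempty sides `A` and `Aᶜ` such that every edge between the sides lies in `F`. Completing both
sides to cliques gives a supergraph `H ≥ G`, and the Sombor index increases strictly along
proper supergraphs, so it suffices to bound `SO(H)` and to identify `H` in the equality case.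

If one side is a single vertex `x`, then `H` is complete away from `x`, hence `H ≅ K_n^c` with
`c = d(x) ≤ k`, and `SO(K_n^c) ≤ SO(K_n^k)` with equality only for `c = k`. If both sides have
at least two vertices, every edge weight is at most `√2 (n - 1)` and `H` has at most
`1 + C(n-2, 2) + k` edges, which already forces `SO(H) < SO(K_n^k)`. -/

/-- The Sombor index of a finite simple graph:
`SO(G) = Σ_{uv ∈ E(G)} √(d(u)² + d(v)²)`. -/
noncomputable def somborIndex {V : Type*} [Fintype V] (G : SimpleGraph V) : ℝ := by
  classical
  exact ∑ e ∈ G.edgeFinset,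
    Sym2.lift ⟨fun u v => Real.sqrt ((G.degree u : ℝ)^2 + (G.degree v : ℝ)^2),
      fun u v => by simp [add_comm]⟩ e

/-- The graph `K_n^k = K_1 ∨ K_k ∨ K_{n−k−1}` on `Fin n`: vertex `0` is the `K_1`
(adjacent exactly to vertices `1,…,k`), vertices `1,…,k` form `K_k` (adjacent to
everything), and vertices `k+1,…,n−1` form `K_{n−k−1}` (adjacent to everything
except `0`). -/
def Knk (n k : ℕ) : SimpleGraph (Fin n) where
  Adj u v := u ≠ v ∧ (u.val = 0 → v.val ≤ k) ∧ (v.val = 0 → u.val ≤ k)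
  symm := ⟨fun u v h => ⟨h.1.symm, h.2.2, h.2.1⟩⟩
  loopless := ⟨fun u h => h.1 rfl⟩

/-- The value of the Sombor index of `K_n^k`. -/
noncomputable def knkValue (n k : ℕ) : ℝ :=
  (k : ℝ) * Real.sqrt ((k : ℝ) ^ 2 + ((n : ℝ) - 1) ^ 2) +
    (k : ℝ) * ((n : ℝ) - k - 1) * Real.sqrt (((n : ℝ) - 1) ^ 2 + ((n : ℝ) - 2) ^ 2) +
    Real.sqrt 2 / 2 * k * ((k : ℝ) - 1) * ((n : ℝ) - 1) +
    Real.sqrt 2 / 2 * ((n : ℝ) - k - 1) * ((n : ℝ) - k - 2) * ((n : ℝ) - 2)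

/-- The vertex connectivity of `G` is at most `k`: either `G` has at most `k+1`
vertices, or some set of at most `k` vertices disconnects `G`. -/
def vertexConnAtMost {V : Type*} [Fintype V] (G : SimpleGraph V) (k : ℕ) : Prop :=
  Fintype.card V ≤ k + 1 ∨
    ∃ S : Finset V, S.card ≤ k ∧ ¬ (G.induce ((↑S : Set V)ᶜ)).Connected

/-- The edge connectivity of `G` is at most `k`: some set of at most `k` edges
of `G` disconnects `G`. -/
def edgeConnAtMost {V : Type*} [Fintype V] (G : SimpleGraph V) (k : ℕ) : Prop :=
  ∃ F : Set (Sym2 V), F ⊆ G.edgeSet ∧ Nat.card F ≤ k ∧ ¬ (G.deleteEdges F).Connected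

open Finset SimpleGraph

section Sombor

variable {V : Type*} [Fintype V]

noncomputable def somborWeight (G : SimpleGraph V) [DecidableRel G.Adj] : Sym2 V → ℝ :=
  Sym2.lift ⟨fun u v => √((G.degree u : ℝ) ^ 2 + (G.degree v : ℝ) ^ 2),
    fun u v => by simp only [add_comm]⟩

variable (G : SimpleGraph V) [DecidableRel G.Adj]

@[simp]
lemma somborWeight_mk (u v : V) :
    somborWeight G s(u, v) = √((G.degree u : ℝ) ^ 2 + (G.degree v : ℝ) ^ 2) :=
  rfl

lemma somborIndex_eq_sum_somborWeight :
    somborIndex G = ∑ e ∈ G.edgeFinset, somborWeight G e := by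
  unfold somborIndex somborWeight
  congr!

lemma somborWeight_nonneg (e : Sym2 V) : 0 ≤ somborWeight G e := by
  induction e with
  | _ u v => exact Real.sqrt_nonneg _

lemma somborWeight_pos {e : Sym2 V} (he : e ∈ G.edgeSet) : 0 < somborWeight G e := by
  induction e with
  | _ u v =>
    have : 0 < G.degree u := G.degree_pos_iff_exists_adj u |>.2 ⟨v, he⟩
    rw [somborWeight_mk]
    positivity

lemma somborWeight_le_sqrt_two_mul {M : ℕ} {u v : V} (hu : G.degree u ≤ M)
    (hv : G.degree v ≤ M) : somborWeight G s(u, v) ≤ √2 * M := by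
  rw [somborWeight_mk, ← Real.sqrt_sq (Nat.cast_nonneg M), ← Real.sqrt_mul zero_le_two]
  gcongr
  have hu' : (G.degree u : ℝ) ≤ M := by exact_mod_cast hu
  have hv' : (G.degree v : ℝ) ≤ M := by exact_mod_cast hv
  nlinarith [(G.degree u).cast_nonneg (α := ℝ), (G.degree v).cast_nonneg (α := ℝ)]

lemma somborIndex_le_sqrt_two_mul_card_edgeFinset :
    somborIndex G ≤ √2 * (Fintype.card V - 1 : ℕ) * #G.edgeFinset := by
  have hdeg (v : V) : G.degree v ≤ Fintype.card V - 1 := by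
    have := G.degree_lt_card_verts v
    omega
  rw [somborIndex_eq_sum_somborWeight, mul_comm]
  refine (sum_le_card_nsmul _ _ _ fun e _ => ?_).trans_eq (nsmul_eq_mul _ _)
  induction e with
  | _ u v => exact somborWeight_le_sqrt_two_mul G (hdeg u) (hdeg v)

lemma two_nsmul_sum_edgeFinset {M : Type*} [AddCommMonoid M] (f : Sym2 V → M) :
    2 • ∑ e ∈ G.edgeFinset, f e = ∑ v, ∑ w ∈ G.neighborFinset v, f s(v, w) := by
  classical
  have hdarts : ∑ d : G.Dart, f d.edge = 2 • ∑ e ∈ G.edgeFinset, f e := by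
    rw [← sum_fiberwise_of_maps_to' (t := G.edgeFinset) (g := Dart.edge)
      (fun d _ => mem_edgeFinset.2 d.edge_mem), smul_sum]
    refine sum_congr rfl fun e he => ?_
    rw [sum_const, G.dart_edge_fiber_card e (mem_edgeFinset.1 he)]
  rw [← hdarts, ← sum_fiberwise (g := fun d : G.Dart => d.fst)]
  refine sum_congr rfl fun v _ => ?_
  rw [G.dart_fst_fiber v, sum_image fun _ _ _ _ h => G.dartOfNeighborSet_injective v h]
  exact (sum_subtype _ (fun w => mem_neighborFinset G v w) (fun w => f s(v, w))).symm

variable {G} {H : SimpleGraph V} [DecidableRel H.Adj]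

lemma somborWeight_mono (h : G ≤ H) (e : Sym2 V) : somborWeight G e ≤ somborWeight H e := by
  induction e with
  | _ u v =>
    have hu : (G.degree u : ℝ) ≤ H.degree u := by exact_mod_cast degree_le_of_le h
    have hv : (G.degree v : ℝ) ≤ H.degree v := by exact_mod_cast degree_le_of_le h
    simp only [somborWeight_mk]
    gcongr

lemma somborIndex_mono (h : G ≤ H) : somborIndex G ≤ somborIndex H := by
  rw [somborIndex_eq_sum_somborWeight, somborIndex_eq_sum_somborWeight]
  calc ∑ e ∈ G.edgeFinset, somborWeight G e ≤ ∑ e ∈ G.edgeFinset, somborWeight H e :=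
        sum_le_sum fun e _ => somborWeight_mono h e
    _ ≤ ∑ e ∈ H.edgeFinset, somborWeight H e :=
        sum_le_sum_of_subset_of_nonneg (edgeFinset_mono h) fun e _ _ => somborWeight_nonneg H e

lemma somborIndex_lt_somborIndex (h : G < H) : somborIndex G < somborIndex H := by
  rw [somborIndex_eq_sum_somborWeight, somborIndex_eq_sum_somborWeight]
  obtain ⟨e, heH, heG⟩ := exists_of_ssubset (edgeFinset_strict_mono h)
  calc ∑ e ∈ G.edgeFinset, somborWeight G e ≤ ∑ e ∈ G.edgeFinset, somborWeight H e :=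
        sum_le_sum fun e _ => somborWeight_mono h.le e
    _ < ∑ e ∈ H.edgeFinset, somborWeight H e :=
        sum_lt_sum_of_subset (edgeFinset_mono h.le) heH heG
          (somborWeight_pos H (mem_edgeFinset.1 heH)) fun e _ _ => somborWeight_nonneg H e

lemma SimpleGraph.Iso.somborIndex_eq {W : Type*} [Fintype W] {G' : SimpleGraph W}
    (φ : G ≃g G') : somborIndex G = somborIndex G' := by
  classical
  rw [somborIndex_eq_sum_somborWeight, somborIndex_eq_sum_somborWeight]
  refine sum_nbij' (Sym2.map φ) (Sym2.map φ.symm) ?_ ?_ ?_ ?_ ?_ <;> intro e he <;>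
    induction e <;> simp_all [φ.map_adj_iff, φ.symm.map_adj_iff]

end Sombor

lemma degree_le_card_of_forall_adj_mem {V : Type*} [Fintype V] (H : SimpleGraph V)
    [DecidableRel H.Adj] {x : V} {F : Finset (Sym2 V)} (hF : ∀ w, H.Adj x w → s(x, w) ∈ F) :
    H.degree x ≤ #F := by
  rw [← card_neighborFinset_eq_degree]
  exact card_le_card_of_injOn (fun w => s(x, w)) (fun w hw => hF w (by simpa using hw))
    fun _ _ _ _ h => Sym2.congr_right.1 h

lemma nonempty_iso_of_forall_adj_of_ne {V W : Type*} [Fintype V] [Fintype W]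
    {G : SimpleGraph V} {G' : SimpleGraph W} [DecidableRel G.Adj] [DecidableRel G'.Adj]
    {x : V} {x' : W} (hG : ∀ u v, u ≠ x → v ≠ x → u ≠ v → G.Adj u v)
    (hG' : ∀ u v, u ≠ x' → v ≠ x' → u ≠ v → G'.Adj u v)
    (hcard : Fintype.card V = Fintype.card W) (hdeg : G.degree x = G'.degree x') :
    Nonempty (G ≃g G') := by
  classical
  have hN : Fintype.card {v // G.Adj x v} = Fintype.card {w // G'.Adj x' w} := by
    simpa [Fintype.card_subtype, ← card_neighborFinset_eq_degree, neighborFinset_eq_filter]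
      using hdeg
  let eN : {v // G.Adj x v} ≃ {w // G'.Adj x' w} := Fintype.equivOfCardEq hN
  let eN₀ : {v // ¬G.Adj x v} ≃ {w // ¬G'.Adj x' w} :=
    Fintype.equivOfCardEq <| by
      rw [Fintype.card_subtype_compl, Fintype.card_subtype_compl, hN, hcard]
  -- adjust the non-neighbours so that `x ↦ x'`
  let eN' := eN₀.trans (Equiv.swap (eN₀ ⟨x, G.irrefl⟩) ⟨x', G'.irrefl⟩)
  let e : V ≃ W := ((Equiv.sumCompl _).symm.trans (eN.sumCongr eN')).trans (Equiv.sumCompl _)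
  have hex : e x = x' := by
    simp [e, eN', Equiv.sumCompl_symm_apply_of_neg (G.irrefl : ¬G.Adj x x)]
  have hadj_x (v : V) : G'.Adj x' (e v) ↔ G.Adj x v := by
    by_cases hv : G.Adj x v
    · simpa [e, Equiv.sumCompl_symm_apply_of_pos hv, hv] using (eN ⟨v, hv⟩).2
    · simpa [e, Equiv.sumCompl_symm_apply_of_neg hv, hv] using (eN' ⟨v, hv⟩).2
  have hex_iff (v : V) : e v = x' ↔ v = x := by rw [← hex, e.apply_eq_iff_eq]
  refine ⟨⟨e, fun {u v} => ?_⟩⟩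
  by_cases hu : u = x
  · subst hu
    rw [hex, hadj_x]
  by_cases hv : v = x
  · subst hv
    rw [hex, G'.adj_comm, hadj_x, G.adj_comm]
  have hu' : e u ≠ x' := (hex_iff u).not.2 hu
  have hv' : e v ≠ x' := (hex_iff v).not.2 hv
  by_cases huv : u = v
  · subst huv
    simp
  · exact iff_of_true (hG' _ _ hu' hv' (e.injective.ne huv)) (hG u v hu hv huv)

lemma sqrt_sq_add_sq_self {x : ℝ} (hx : 0 ≤ x) : √(x ^ 2 + x ^ 2) = √2 * x := by
  rw [← two_mul, Real.sqrt_mul zero_le_two, Real.sqrt_sq hx]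

lemma sqrt_two_div_two_mul_add_le_sqrt (x y : ℝ) : √2 / 2 * (x + y) ≤ √(x ^ 2 + y ^ 2) :=
  Real.le_sqrt_of_sq_le (by
    rw [mul_pow, div_pow, Real.sq_sqrt zero_le_two]
    nlinarith [sq_nonneg (x - y)])

lemma sqrt_two_div_two_mul_add_lt_sqrt {x y : ℝ} (hxy : x ≠ y) :
    √2 / 2 * (x + y) < √(x ^ 2 + y ^ 2) :=
  Real.lt_sqrt_of_sq_lt (by
    rw [mul_pow, div_pow, Real.sq_sqrt zero_le_two]
    nlinarith [sq_pos_of_ne_zero (sub_ne_zero.2 hxy)])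

section Knk

variable {n k : ℕ}

instance : DecidableRel (Knk n k).Adj := fun u v =>
  decidable_of_iff (u ≠ v ∧ (u.val = 0 → v.val ≤ k) ∧ (v.val = 0 → u.val ≤ k)) Iff.rfl

lemma knk_adj_of_ne_zero {u v : Fin n} (hu : u.val ≠ 0) (hv : v.val ≠ 0) (huv : u ≠ v) :
    (Knk n k).Adj u v :=
  ⟨huv, fun h => absurd h hu, fun h => absurd h hv⟩

lemma knk_mono {c : ℕ} (h : c ≤ k) : Knk n c ≤ Knk n k :=
  fun _ _ hadj => ⟨hadj.1, fun h0 => (hadj.2.1 h0).trans h, fun h0 => (hadj.2.2 h0).trans h⟩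

lemma knk_lt_knk {c : ℕ} (hc : c < k) (hkn : k < n) : Knk n c < Knk n k := by
  refine lt_of_le_not_ge (knk_mono hc.le) fun hle => ?_
  have hadj : (Knk n k).Adj ⟨0, by omega⟩ ⟨c + 1, by omega⟩ :=
    ⟨by simp [Fin.ext_iff], fun _ => hc, by simp⟩
  exact absurd ((hle hadj).2.1 rfl) (by simp)

lemma sum_fin_eq_of_eq_on_knk_blocks (hkn : k < n) (g : Fin n → ℝ) {a b c : ℝ}
    (h0 : ∀ i : Fin n, i.val = 0 → g i = a)
    (h1 : ∀ i : Fin n, 1 ≤ i.val → i.val ≤ k → g i = b)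
    (h2 : ∀ i : Fin n, k < i.val → g i = c) :
    ∑ i, g i = a + k * b + (n - k - 1) * c := by
  rw [sum_fin_eq_sum_range, ← sum_range_add_sum_Ico _ hkn, sum_range_succ']
  have hb : ∀ i ∈ range k, (if h : i + 1 < n then g ⟨i + 1, h⟩ else 0) = b := fun i hi => by
    rw [mem_range] at hi
    rw [dif_pos (by omega), h1 _ (by simp) (by simp; omega)]
  have hc : ∀ i ∈ Ico (k + 1) n, (if h : i < n then g ⟨i, h⟩ else 0) = c := fun i hi => by
    rw [mem_Ico] at hi
    rw [dif_pos hi.2, h2 _ (by simp; omega)]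
  rw [sum_congr rfl hb, sum_congr rfl hc, dif_pos (by omega), h0 _ rfl, sum_const, sum_const,
    card_range, Nat.card_Ico, nsmul_eq_mul, nsmul_eq_mul, Nat.cast_sub hkn]
  push_cast
  ring

lemma sum_neighborFinset_knk (hkn : k < n) (u : Fin n) (f : Fin n → ℝ) {a b c : ℝ}
    (h0 : ∀ i : Fin n, i.val = 0 → f i = a)
    (h1 : ∀ i : Fin n, 1 ≤ i.val → i.val ≤ k → f i = b)
    (h2 : ∀ i : Fin n, k < i.val → f i = c) :
    ∑ w ∈ (Knk n k).neighborFinset u, f w =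
      if u.val = 0 then k * b
      else if u.val ≤ k then a + (k - 1) * b + (n - k - 1) * c
      else k * b + (n - k - 2) * c := by
  set P : Fin n → Prop := fun w => (u.val = 0 → w.val ≤ k) ∧ (w.val = 0 → u.val ≤ k)
  -- `Adj u w` is `u ≠ w ∧ P w`, and `P u` always holds
  have hsplit (w : Fin n) : (if (Knk n k).Adj u w then f w else 0) =
      (if P w then f w else 0) - if u = w then f u else 0 := by
    by_cases huw : u = w
    · subst huw
      have hPu : P u := ⟨fun _ => by omega, fun _ => by omega⟩
      simp [hPu]
    · simp [P, huw, Knk]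
  rw [neighborFinset_eq_filter, sum_filter, sum_congr rfl fun w _ => hsplit w, sum_sub_distrib,
    sum_ite_eq, if_pos (mem_univ u)]
  rcases Nat.eq_zero_or_pos u.val with hu | hu
  · rw [sum_fin_eq_of_eq_on_knk_blocks hkn _ (a := a) (b := b) (c := 0)
      (fun i hi => by rw [if_pos (by simp only [P]; omega), h0 i hi])
      (fun i hi hik => by rw [if_pos (by simp only [P]; omega), h1 i hi hik])
      (fun i hi => by rw [if_neg (by simp only [P]; omega)]), h0 u hu, if_pos hu]
    ring
  by_cases huk : u.val ≤ k
  · rw [sum_fin_eq_of_eq_on_knk_blocks hkn _ (a := a) (b := b) (c := c)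
      (fun i hi => by rw [if_pos (by simp only [P]; omega), h0 i hi])
      (fun i hi hik => by rw [if_pos (by simp only [P]; omega), h1 i hi hik])
      (fun i hi => by rw [if_pos (by simp only [P]; omega), h2 i hi]),
      h1 u hu huk, if_neg (by omega), if_pos huk]
    ring
  · rw [sum_fin_eq_of_eq_on_knk_blocks hkn _ (a := 0) (b := b) (c := c)
      (fun i hi => by rw [if_neg (by simp only [P]; omega)])
      (fun i hi hik => by rw [if_pos (by simp only [P]; omega), h1 i hi hik])
      (fun i hi => by rw [if_pos (by simp only [P]; omega), h2 i hi]),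
      h2 u (by omega), if_neg (by omega), if_neg huk]
    ring

lemma knk_degree (hkn : k < n) (u : Fin n) :
    ((Knk n k).degree u : ℝ) =
      if u.val = 0 then (k : ℝ) else if u.val ≤ k then (n : ℝ) - 1 else (n : ℝ) - 2 := by
  rw [← card_neighborFinset_eq_degree, card_eq_sum_ones, Nat.cast_sum, Nat.cast_one,
    sum_neighborFinset_knk hkn u _ (a := 1) (b := 1) (c := 1) (by simp) (by simp) (by simp)]
  split_ifs <;> ring

lemma knk_degree_zero (hkn : k < n) : (Knk n k).degree ⟨0, by omega⟩ = k := by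
  have := knk_degree hkn ⟨0, by omega⟩
  rw [if_pos rfl] at this
  exact_mod_cast this

lemma somborIndex_knk (hkn : k < n) : somborIndex (Knk n k) = knkValue n k := by
  set D : Fin n → ℝ := fun u => ((Knk n k).degree u : ℝ)
  have hD0 (i : Fin n) (hi : i.val = 0) : D i = k := by simp only [D, knk_degree hkn, if_pos hi]
  have hD1 (i : Fin n) (hi : 1 ≤ i.val) (hik : i.val ≤ k) : D i = n - 1 := by
    simp only [D, knk_degree hkn, if_neg (show i.val ≠ 0 by omega), if_pos hik]
  have hD2 (i : Fin n) (hi : k < i.val) : D i = n - 2 := by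
    simp only [D, knk_degree hkn, if_neg (show i.val ≠ 0 by omega),
      if_neg (show ¬i.val ≤ k by omega)]
  have hinner (u : Fin n) := sum_neighborFinset_knk hkn u (fun w => √(D u ^ 2 + D w ^ 2))
    (fun i hi => by rw [hD0 i hi]) (fun i hi hik => by rw [hD1 i hi hik])
    (fun i hi => by rw [hD2 i hi])
  have htwo : 2 * somborIndex (Knk n k) =
      ∑ u, ∑ w ∈ (Knk n k).neighborFinset u, √(D u ^ 2 + D w ^ 2) := by
    rw [somborIndex_eq_sum_somborWeight, two_mul, ← two_nsmul, two_nsmul_sum_edgeFinset]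
    rfl
  have hn : (1 : ℝ) ≤ n := by exact_mod_cast (show 1 ≤ n by omega)
  -- the inner sums are constant on each block `{0}`, `{1, …, k}`, `{k + 1, …, n - 1}`
  rw [sum_congr rfl fun u _ => hinner u, sum_fin_eq_of_eq_on_knk_blocks hkn _
    (a := k * √(k ^ 2 + (n - 1) ^ 2))
    (b := √((n - 1) ^ 2 + k ^ 2) + (k - 1) * (√2 * (n - 1)) +
      (n - k - 1) * √((n - 1) ^ 2 + (n - 2) ^ 2))
    (c := k * √((n - 2) ^ 2 + (n - 1) ^ 2) + (n - k - 2) * √((n - 2) ^ 2 + (n - 2) ^ 2))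
    (fun i hi => by rw [if_pos hi, hD0 i hi])
    (fun i hi hik => by
      rw [if_neg (by omega), if_pos hik, hD1 i hi hik, sqrt_sq_add_sq_self (by linarith)])
    (fun i hi => by rw [if_neg (by omega), if_neg (by omega), hD2 i hi])] at htwo
  have hdiag :
      ((n : ℝ) - k - 1) * √((n - 2) ^ 2 + (n - 2) ^ 2) = (n - k - 1) * (√2 * (n - 2)) := by
    -- for `n = k + 1` the factor vanishes, while `n - 2` may be negative
    rcases Nat.lt_or_ge (k + 1) n with h | h
    · rw [sqrt_sq_add_sq_self (by norm_num; exact_mod_cast (show 2 ≤ n by omega))]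
    · rw [show (n : ℝ) = k + 1 by exact_mod_cast (show n = k + 1 by omega)]
      ring
  rw [add_comm ((n - 1 : ℝ) ^ 2), add_comm ((n - 2 : ℝ) ^ 2)] at htwo
  rw [knkValue]
  linear_combination htwo / 2 + (n - k - 2) / 2 * hdiag

lemma sqrt_two_mul_lt_knkValue (hn : 4 ≤ n) (hk : 1 ≤ k) (hkn : k < n) :
    √2 * (n - 1) * (1 + (n - 2) * (n - 3) / 2 + k) < knkValue n k := by
  have hn' : (4 : ℝ) ≤ n := by exact_mod_cast hn
  have hk' : (1 : ℝ) ≤ k := by exact_mod_cast hk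
  have hkn' : (k : ℝ) + 1 ≤ n := by exact_mod_cast hkn
  have hgap₁ := sqrt_two_div_two_mul_add_le_sqrt k (n - 1)
  have hgap₂ := sqrt_two_div_two_mul_add_lt_sqrt (x := (n : ℝ) - 1) (y := n - 2) (by linarith)
  -- each `√(x² + y²)` in `knkValue` is at least `√2 / 2 * (x + y)`; the rest is a polynomial
  have hsplit : knkValue n k - √2 * (n - 1) * (1 + (n - 2) * (n - 3) / 2 + k) =
      k * (√(k ^ 2 + (n - 1) ^ 2) - √2 / 2 * (k + (n - 1))) +
      k * (n - k - 1) * (√((n - 1) ^ 2 + (n - 2) ^ 2) - √2 / 2 * ((n - 1) + (n - 2))) +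
      √2 / 2 * ((n - 4) * (n - 1) + k * (k - 1)) := by
    rw [knkValue]
    ring
  have h₁ : 0 ≤ (k : ℝ) * (√(k ^ 2 + (n - 1) ^ 2) - √2 / 2 * (k + (n - 1))) :=
    mul_nonneg (by linarith) (by linarith)
  have hsqrt2 : 0 < √2 / 2 := by positivity
  rcases hkn'.lt_or_eq with hlt | heq
  · have h₂ : 0 < (k : ℝ) * (n - k - 1) *
        (√((n - 1) ^ 2 + (n - 2) ^ 2) - √2 / 2 * ((n - 1) + (n - 2))) :=
      mul_pos (mul_pos (by linarith) (by linarith)) (by linarith)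
    have h₃ : 0 ≤ √2 / 2 * ((n - 4) * (n - 1) + k * (k - 1)) :=
      mul_nonneg hsqrt2.le (by nlinarith)
    linarith
  · have h₂ : (k : ℝ) * (n - k - 1) = 0 := by rw [← heq]; ring
    have h₃ : 0 < √2 / 2 * ((n - 4) * (n - 1) + k * (k - 1)) :=
      mul_pos hsqrt2 (by rw [← heq]; nlinarith)
    rw [h₂, zero_mul] at hsplit
    linarith

end Knk

section Cut

variable {V : Type*} [Fintype V]

lemma exists_cut_of_edgeConnAtMost [DecidableEq V] {G : SimpleGraph V} {k : ℕ} (hG : G.Connected)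
    (h : edgeConnAtMost G k) :
    ∃ (A : Finset V) (F : Finset (Sym2 V)), A.Nonempty ∧ Aᶜ.Nonempty ∧ #F ≤ k ∧
      ∀ u v, G.Adj u v → ¬(u ∈ A ↔ v ∈ A) → s(u, v) ∈ F := by
  classical
  obtain ⟨F, -, hF, hdisc⟩ := h
  have : Nonempty V := hG.nonempty
  obtain ⟨u, v, huv⟩ : ∃ u v, ¬(G.deleteEdges F).Reachable u v := by
    by_contra! hreach
    exact hdisc ⟨hreach⟩
  refine ⟨({w | (G.deleteEdges F).Reachable u w} : Finset V), F.toFinite.toFinset,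
    ⟨u, by simp⟩, ⟨v, by simpa using huv⟩, ?_, fun a b hab hcross => ?_⟩
  · rwa [← Set.ncard_eq_toFinset_card, ← Nat.card_coe_set_eq]
  · by_contra hF
    have hdel : (G.deleteEdges F).Adj a b := (deleteEdges_adj ..).2 ⟨hab, by simpa using hF⟩
    exact hcross (by simpa using ⟨fun ha => ha.trans hdel.reachable,
      fun hb => hb.trans hdel.symm.reachable⟩)

lemma card_edgeFinset_le_of_cut [DecidableEq V] (H : SimpleGraph V) [DecidableRel H.Adj]
    (A : Finset V) (F : Finset (Sym2 V))
    (hcross : ∀ u v, H.Adj u v → ¬(u ∈ A ↔ v ∈ A) → s(u, v) ∈ F) :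
    #H.edgeFinset ≤ (#A).choose 2 + (#Aᶜ).choose 2 + #F := by
  have hsub : H.edgeFinset ⊆
      A.offDiag.image Sym2.mk.uncurry ∪ Aᶜ.offDiag.image Sym2.mk.uncurry ∪ F := by
    intro e he
    induction e with
    | _ u v =>
      have huv : H.Adj u v := mem_edgeFinset.1 he
      by_cases hside : u ∈ A ↔ v ∈ A
      · by_cases hu : u ∈ A
        · exact mem_union_left _ (mem_union_left _
            (mem_image.2 ⟨(u, v), mem_offDiag.2 ⟨hu, hside.1 hu, huv.ne⟩, rfl⟩))
        · exact mem_union_left _ (mem_union_right _ (mem_image.2 ⟨(u, v),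
            mem_offDiag.2 ⟨mem_compl.2 hu, mem_compl.2 (hu ∘ hside.2), huv.ne⟩, rfl⟩))
      · exact mem_union_right _ (hcross u v huv hside)
  calc #H.edgeFinset
      ≤ #(A.offDiag.image Sym2.mk.uncurry ∪ Aᶜ.offDiag.image Sym2.mk.uncurry ∪ F) :=
        card_le_card hsub
    _ ≤ #(A.offDiag.image Sym2.mk.uncurry) + #(Aᶜ.offDiag.image Sym2.mk.uncurry) + #F :=
        (card_union_le _ _).trans (Nat.add_le_add_right (card_union_le _ _) _)
    _ = _ := by rw [Sym2.card_image_offDiag, Sym2.card_image_offDiag]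

end Cut

def completeSides {V : Type*} [DecidableEq V] (A : Finset V) : SimpleGraph V :=
  SimpleGraph.fromRel fun u v => (u ∈ A ↔ v ∈ A)

lemma completeSides_adj {V : Type*} [DecidableEq V] {A : Finset V} {u v : V} :
    (completeSides A).Adj u v ↔ u ≠ v ∧ (u ∈ A ↔ v ∈ A) := by
  simp [completeSides, iff_comm]

section Extremal

variable {V : Type*} [Fintype V] {n k : ℕ}

lemma somborIndex_le_knkValue_of_forall_adj_of_ne (H : SimpleGraph V) [DecidableRel H.Adj]
    {x : V} (hH : ∀ u v, u ≠ x → v ≠ x → u ≠ v → H.Adj u v)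
    (hcard : Fintype.card V = n) (hdeg : H.degree x ≤ k) (hkn : k < n) :
    somborIndex H ≤ knkValue n k ∧
      (somborIndex H = knkValue n k → Nonempty (H ≃g Knk n k)) := by
  obtain ⟨ψ⟩ : Nonempty (H ≃g Knk n (H.degree x)) :=
    nonempty_iso_of_forall_adj_of_ne (x' := ⟨0, by omega⟩) hH
      (fun u v hu hv => knk_adj_of_ne_zero (Fin.val_ne_iff.2 hu) (Fin.val_ne_iff.2 hv))
      (by simp [hcard]) (knk_degree_zero (by omega)).symm
  rw [ψ.somborIndex_eq, ← somborIndex_knk hkn]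
  refine ⟨somborIndex_mono (knk_mono hdeg), fun heq => ?_⟩
  rcases hdeg.lt_or_eq with hlt | rfl
  · exact absurd heq (somborIndex_lt_somborIndex (knk_lt_knk hlt hkn)).ne
  · exact ⟨ψ⟩

lemma somborIndex_lt_knkValue_of_cut [DecidableEq V] (H : SimpleGraph V) [DecidableRel H.Adj]
    (A : Finset V) (F : Finset (Sym2 V)) (hcard : Fintype.card V = n) (hk : 1 ≤ k) (hkn : k < n)
    (hA : 2 ≤ #A) (hAc : 2 ≤ #Aᶜ) (hF : #F ≤ k)
    (hcross : ∀ u v, H.Adj u v → ¬(u ∈ A ↔ v ∈ A) → s(u, v) ∈ F) :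
    somborIndex H < knkValue n k := by
  have hn : #A + #Aᶜ = n := by rw [card_add_card_compl, hcard]
  have hA' : (2 : ℝ) ≤ #A := by exact_mod_cast hA
  have hAc' : (2 : ℝ) ≤ #Aᶜ := by exact_mod_cast hAc
  have hn' : ((#A : ℕ) : ℝ) + #Aᶜ = n := by exact_mod_cast hn
  -- the edge count is largest when one side has only two vertices
  have hE : (#H.edgeFinset : ℝ) ≤ 1 + (n - 2) * (n - 3) / 2 + k := by
    have hE : (#H.edgeFinset : ℝ) ≤ (#A).choose 2 + (#Aᶜ).choose 2 + #F := by
      exact_mod_cast card_edgeFinset_le_of_cut H A F hcross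
    have hF' : (#F : ℝ) ≤ k := by exact_mod_cast hF
    rw [Nat.cast_choose_two, Nat.cast_choose_two, ← hn'] at *
    nlinarith [mul_nonneg (sub_nonneg.2 hA') (sub_nonneg.2 hAc')]
  calc somborIndex H ≤ √2 * (Fintype.card V - 1 : ℕ) * #H.edgeFinset :=
        somborIndex_le_sqrt_two_mul_card_edgeFinset H
    _ ≤ √2 * (n - 1) * (1 + (n - 2) * (n - 3) / 2 + k) := by
        rw [hcard, Nat.cast_sub (by omega), Nat.cast_one]
        have : (1 : ℝ) ≤ n := by exact_mod_cast (show 1 ≤ n by omega)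
        gcongr
    _ < knkValue n k := sqrt_two_mul_lt_knkValue (by omega) hk hkn

lemma somborIndex_le_knkValue_of_cut_of_card_eq_one (H : SimpleGraph V) [DecidableRel H.Adj]
    (B : Finset V) (F : Finset (Sym2 V)) (hB : #B = 1) (hcard : Fintype.card V = n)
    (hkn : k < n) (hF : #F ≤ k) (hside : ∀ u v, u ≠ v → (u ∈ B ↔ v ∈ B) → H.Adj u v)
    (hcross : ∀ u v, H.Adj u v → ¬(u ∈ B ↔ v ∈ B) → s(u, v) ∈ F) :
    somborIndex H ≤ knkValue n k ∧
      (somborIndex H = knkValue n k → Nonempty (H ≃g Knk n k)) := by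
  obtain ⟨x, rfl⟩ := card_eq_one.1 hB
  have hdeg : H.degree x ≤ #F := degree_le_card_of_forall_adj_mem H fun w hw =>
    hcross x w hw (by simpa using hw.ne')
  exact somborIndex_le_knkValue_of_forall_adj_of_ne H
    (fun u v hu hv huv => hside u v huv (by simp [hu, hv])) hcard (hdeg.trans hF) hkn

lemma somborIndex_le_knkValue_of_cut [DecidableEq V] (H : SimpleGraph V) [DecidableRel H.Adj]
    (A : Finset V) (F : Finset (Sym2 V)) (hcard : Fintype.card V = n) (hk : 1 ≤ k) (hkn : k < n)
    (hA : A.Nonempty) (hAc : Aᶜ.Nonempty) (hF : #F ≤ k)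
    (hside : ∀ u v, u ≠ v → (u ∈ A ↔ v ∈ A) → H.Adj u v)
    (hcross : ∀ u v, H.Adj u v → ¬(u ∈ A ↔ v ∈ A) → s(u, v) ∈ F) :
    somborIndex H ≤ knkValue n k ∧
      (somborIndex H = knkValue n k → Nonempty (H ≃g Knk n k)) := by
  by_cases h₁ : #A = 1
  · exact somborIndex_le_knkValue_of_cut_of_card_eq_one H A F h₁ hcard hkn hF hside hcross
  by_cases h₁' : #Aᶜ = 1
  · exact somborIndex_le_knkValue_of_cut_of_card_eq_one H Aᶜ F h₁' hcard hkn hF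
      (by simpa only [mem_compl, not_iff_not] using hside)
      (by simpa only [mem_compl, not_iff_not] using hcross)
  have hlt := somborIndex_lt_knkValue_of_cut H A F hcard hk hkn
    (by have := hA.card_pos; omega) (by have := hAc.card_pos; omega) hF hcross
  exact ⟨hlt.le, fun h => absurd h hlt.ne⟩

end Extremal

/-- Upper bound for the Sombor index of connected graphs on n vertices with
edge connectivity at most k, with equality iff G ≅ K_n^k. -/
theorem somborIndex_le_of_edgeConnAtMost {V : Type*} [Fintype V] (G : SimpleGraph V)
    (hG : G.Connected) (n k : ℕ) (hcard : Fintype.card V = n)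
    (hk : 1 ≤ k) (hkn : k ≤ n - 1) (hconn : edgeConnAtMost G k) :
    somborIndex G ≤ knkValue n k ∧
      (somborIndex G = knkValue n k ↔ Nonempty (G ≃g Knk n k)) := by
  classical
  have hkn' : k < n := by
    have := hG.nonempty
    have := Fintype.card_pos (α := V)
    omega
  obtain ⟨A, F, hA, hAc, hF, hcut⟩ := exists_cut_of_edgeConnAtMost hG hconn
  set H := G ⊔ completeSides A
  have hGH : G ≤ H := le_sup_left
  obtain ⟨hle, hiso⟩ := somborIndex_le_knkValue_of_cut H A F hcard hk hkn' hA hAc hF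
    (fun u v huv hs => Or.inr (completeSides_adj.2 ⟨huv, hs⟩))
    (fun u v huv hs => hcut u v (huv.resolve_right fun h => hs (completeSides_adj.1 h).2) hs)
  refine ⟨(somborIndex_mono hGH).trans hle, fun heq => ?_, fun ⟨φ⟩ => ?_⟩
  · have hGH' : G = H := by
      by_contra hne
      exact ((somborIndex_lt_somborIndex (hGH.lt_of_ne hne)).trans_le hle).ne heq
    rw [hGH'] at heq ⊢
    exact hiso heq
  · rw [φ.somborIndex_eq, somborIndex_knk hkn']
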